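/- Let N ≥ 2, 2ℓ ∈ ℤ≥0, and define, for spin parameter s ∈ ℂ, the transfer matrix T^{(s)}(λ) acting on functions f : ℂ^N → ℂ by (T^{(s)}(λ)f) = ∑_{(i₁,…,i_N)∈{1,2}^N} L^{(1)}_{i₁i₂}(λ;s)·L^{(2)}_{i₂i₃}(λ;s)⋯L^{(N)}_{i_Ni₁}(λ;s) f, where L^{(n)}_{ij}(λ;s) is the entry L_{ij}(λ) of the elliptic L-operator with spin s acting in the variable z_n (operators in distinct variables commute). Let Φ(z₁,…,z_N) = ∏_{i=1}^{N} φ_ℓ(z_i, z_{i+1}) with indices mod N (z_{N+1} = z₁). Then for every f and all points where both sides are defined: T^{(ℓ)}(λ)(Φ·f) = Φ·(T^{(−ℓ−1)}(λ)f); i.e. multiplication by Φ intertwines the spin-(−ℓ−1) and spin-ℓ transfer matrices. -/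

import Mathlib

/-- Jacobi theta function `θ_a(z|τ)` for `a = 1,2,3,4`. -/
noncomputable def jTheta (a : ℕ) (z τ : ℂ) : ℂ :=
  match a with
  | 1 => -∑' k : ℤ, Complex.exp ((Real.pi : ℂ) * Complex.I * τ * ((k : ℂ) + 1/2)^2
          + 2 * (Real.pi : ℂ) * Complex.I * (z + 1/2) * ((k : ℂ) + 1/2))
  | 2 => ∑' k : ℤ, Complex.exp ((Real.pi : ℂ) * Complex.I * τ * ((k : ℂ) + 1/2)^2
          + 2 * (Real.pi : ℂ) * Complex.I * z * ((k : ℂ) + 1/2))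
  | 3 => ∑' k : ℤ, Complex.exp ((Real.pi : ℂ) * Complex.I * τ * (k : ℂ)^2
          + 2 * (Real.pi : ℂ) * Complex.I * z * (k : ℂ))
  | 4 => ∑' k : ℤ, Complex.exp ((Real.pi : ℂ) * Complex.I * τ * (k : ℂ)^2
          + 2 * (Real.pi : ℂ) * Complex.I * (z + 1/2) * (k : ℂ))
  | _ => 0

/-- Cyclic successor on `Fin N` (so `z_{N+1} = z₁`). -/
def cyc {N : ℕ} (n : Fin N) : Fin N := ⟨(n.1 + 1) % N, Nat.mod_lt _ n.pos⟩

/-- The Sklyanin operator `s_a^{(s)}` acting in the variable `z_n` of a function of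
`N` complex variables. -/
noncomputable def sOpN (τ η s : ℂ) (N : ℕ) (n : Fin N) (a : ℕ)
    (f : (Fin N → ℂ) → ℂ) (z : Fin N → ℂ) : ℂ :=
  (jTheta (a+1) (2 * z n - 2*s*η) τ * f (Function.update z n (z n + η))
    - jTheta (a+1) (-(2 * z n) - 2*s*η) τ * f (Function.update z n (z n - η))) /
    jTheta 1 (2 * z n) τ

/-- Entry `L^{(n)}_{ij}(λ; s)` of the elliptic L-operator with spin `s` acting in the
variable `z_n`. -/
noncomputable def LOpN (τ η s lam : ℂ) (N : ℕ) (n : Fin N) (i j : Fin 2)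
    (f : (Fin N → ℂ) → ℂ) (z : Fin N → ℂ) : ℂ :=
  if i = 0 then
    if j = 0 then
      (1/2) * (jTheta 1 (2*lam) τ * sOpN τ η s N n 0 f z
        + jTheta 4 (2*lam) τ * sOpN τ η s N n 3 f z)
    else
      (1/2) * (jTheta 2 (2*lam) τ * sOpN τ η s N n 1 f z
        + jTheta 3 (2*lam) τ * sOpN τ η s N n 2 f z)
  else
    if j = 0 then
      (1/2) * (jTheta 2 (2*lam) τ * sOpN τ η s N n 1 f z
        - jTheta 3 (2*lam) τ * sOpN τ η s N n 2 f z)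
    else
      (1/2) * (jTheta 1 (2*lam) τ * sOpN τ η s N n 0 f z
        - jTheta 4 (2*lam) τ * sOpN τ η s N n 3 f z)

/-- The transfer matrix `T^{(s)}(λ)` of the homogeneous `N`-site chain:
`(T^{(s)}(λ)f) = ∑_{i : Fin N → Fin 2} L^{(1)}_{i₁i₂}(λ;s)·L^{(2)}_{i₂i₃}(λ;s) ⋯
L^{(N)}_{i_N i₁}(λ;s) f` (indices cyclic). -/
noncomputable def transfer (τ η s lam : ℂ) (N : ℕ)
    (f : (Fin N → ℂ) → ℂ) (z : Fin N → ℂ) : ℂ :=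
  ∑ i : Fin N → Fin 2,
    ((List.ofFn (fun n : Fin N =>
        (LOpN τ η s lam N n (i n) (i (cyc n)) :
          ((Fin N → ℂ) → ℂ) → ((Fin N → ℂ) → ℂ)))).foldr (fun op g => op g) f) z

/-- `Φ_ℓ(z) = ∏_{j=0}^{2ℓ} θ₁(z + 2(j−ℓ)η|τ)`, written with `n2ℓ = 2ℓ ∈ ℤ≥0`. -/
noncomputable def PhiFun (τ η : ℂ) (n : ℕ) (z : ℂ) : ℂ :=
  ∏ j ∈ Finset.range (n+1), jTheta 1 (z + (2*(j : ℂ) - (n : ℂ))*η) τ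

/-- `φ_ℓ(z₁,z₂) = Φ_ℓ(z₁−z₂)·Φ_ℓ(z₁+z₂)`. -/
noncomputable def phiFun (τ η : ℂ) (n : ℕ) (z₁ z₂ : ℂ) : ℂ :=
  PhiFun τ η n (z₁ - z₂) * PhiFun τ η n (z₁ + z₂)


/-!
By the doubling formulas for theta functions, each shift coefficient of the L-operator is a
row intertwining vector times a column one. Hence `T^{(s)}(λ) f` is a sum over the `2^N` shifts
`z ↦ z ± η` of `f`, and taking the trace over the auxiliary indices contracts the coefficient of
each shift to a product over the links of `θ₁(2λ + a_n - a_{n+1}) θ₁(a_n + a_{n+1} - 2sη)`,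
`a_n = ±z_n`. The spin enters only through the second factor. Since
`θ₁(w - 2ℓη) Φ_ℓ(w + 2η) = θ₁(w + (2ℓ+2)η) Φ_ℓ(w)` (a telescoping product) and `Φ_ℓ` has a
parity, `φ_ℓ` evaluated at the shifted point turns the spin-`ℓ` link factor into the
spin-`(-ℓ-1)` one.
-/
open Complex Finset
open scoped Real

noncomputable section

def thetaTerm (c w τ : ℂ) (k : ℤ) : ℂ :=
  cexp (π * I * τ * (k + c) ^ 2 + 2 * π * I * w * (k + c))

lemma thetaTerm_eq_mul_jacobiTheta₂_term (c w τ : ℂ) (k : ℤ) :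
    thetaTerm c w τ k = cexp (π * I * τ * c ^ 2 + 2 * π * I * w * c) *
      jacobiTheta₂_term k (w + c * τ) τ := by
  rw [thetaTerm, jacobiTheta₂_term, ← exp_add]
  ring_nf

lemma summable_norm_thetaTerm {τ : ℂ} (hτ : 0 < τ.im) (c w : ℂ) :
    Summable fun k => ‖thetaTerm c w τ k‖ := by
  simp_rw [thetaTerm_eq_mul_jacobiTheta₂_term, norm_mul]
  exact ((summable_jacobiTheta₂_term_iff _ _).mpr hτ).norm.mul_left _

lemma thetaTerm_add_one (c w τ : ℂ) (k : ℤ) :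
    thetaTerm c (w + 1) τ k = cexp (2 * π * I * c) * thetaTerm c w τ k := by
  rw [thetaTerm, thetaTerm, ← exp_add, exp_eq_exp_iff_exists_int]
  exact ⟨k, by ring⟩

lemma tsum_thetaTerm_mul_tsum_thetaTerm {τ : ℂ} (hτ : 0 < τ.im) (c c' X Y : ℂ) :
    (∑' k, thetaTerm c X τ k) * ∑' k, thetaTerm c' Y τ k =
      ∑' p : ℤ × ℤ, thetaTerm c X τ p.1 * thetaTerm c' Y τ p.2 :=
  tsum_mul_tsum_of_summable_norm (summable_norm_thetaTerm hτ c X)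
    (summable_norm_thetaTerm hτ c' Y)

lemma jTheta_one_eq_neg_jTheta_two (z τ : ℂ) : jTheta 1 z τ = -jTheta 2 (z + 1 / 2) τ := rfl

lemma jTheta_two_eq_tsum (z τ : ℂ) : jTheta 2 z τ = ∑' k, thetaTerm (1 / 2) z τ k := rfl

lemma jTheta_three_eq_tsum (z τ : ℂ) : jTheta 3 z τ = ∑' k, thetaTerm 0 z τ k := by
  simp only [jTheta, thetaTerm, add_zero]

lemma jTheta_four_eq_jTheta_three (z τ : ℂ) : jTheta 4 z τ = jTheta 3 (z + 1 / 2) τ := by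
  simp only [jTheta]

lemma jTheta_two_add_one (z τ : ℂ) : jTheta 2 (z + 1) τ = -jTheta 2 z τ := by
  simp_rw [jTheta_two_eq_tsum, thetaTerm_add_one, tsum_mul_left]
  rw [show 2 * (π : ℂ) * I * (1 / 2) = π * I by ring, exp_pi_mul_I, neg_one_mul]

lemma jTheta_three_add_one (z τ : ℂ) : jTheta 3 (z + 1) τ = jTheta 3 z τ := by
  simp_rw [jTheta_three_eq_tsum, thetaTerm_add_one, mul_zero, exp_zero, one_mul]

lemma jTheta_two_neg (z τ : ℂ) : jTheta 2 (-z) τ = jTheta 2 z τ := by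
  rw [jTheta_two_eq_tsum, jTheta_two_eq_tsum, ← (Equiv.subLeft (-1 : ℤ)).tsum_eq]
  refine tsum_congr fun k => ?_
  simp only [Equiv.subLeft_apply, thetaTerm]
  push_cast
  ring_nf

lemma jTheta_one_neg (z τ : ℂ) : jTheta 1 (-z) τ = -jTheta 1 z τ := by
  rw [jTheta_one_eq_neg_jTheta_two, jTheta_one_eq_neg_jTheta_two,
    show -z + 1 / 2 = -(z - 1 / 2) by ring, jTheta_two_neg,
    show z + 1 / 2 = z - 1 / 2 + 1 by ring, jTheta_two_add_one, neg_neg]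

def latticeSplit : (ℤ × ℤ) ⊕ (ℤ × ℤ) ≃ ℤ × ℤ where
  toFun := Sum.elim (fun p => (p.1 + p.2, p.1 - p.2)) (fun p => (p.1 + p.2 + 1, p.1 - p.2))
  invFun a :=
    if (a.1 + a.2) % 2 = 0 then .inl ((a.1 + a.2) / 2, (a.1 - a.2) / 2)
    else .inr ((a.1 + a.2 - 1) / 2, (a.1 - a.2 - 1) / 2)
  left_inv := by
    rintro (⟨p, q⟩ | ⟨p, q⟩) <;> dsimp only [Sum.elim_inl, Sum.elim_inr] <;> split_ifs <;>
      (try simp only [Sum.inl.injEq, Sum.inr.injEq, Prod.mk.injEq]) <;> omega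
  right_inv := by
    rintro ⟨a, b⟩
    dsimp only
    split_ifs <;> simp only [Sum.elim_inl, Sum.elim_inr, Prod.mk.injEq] <;> omega

lemma tsum_eq_tsum_even_add_tsum_odd {F : ℤ × ℤ → ℂ} (hF : Summable F) :
    ∑' a, F a = ∑' p : ℤ × ℤ, F (p.1 + p.2, p.1 - p.2) +
      ∑' p : ℤ × ℤ, F (p.1 + p.2 + 1, p.1 - p.2) := by
  have hF' := latticeSplit.summable_iff.mpr hF
  rw [← latticeSplit.tsum_eq]
  exact Summable.tsum_sum (f := fun c => F (latticeSplit c))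
    (hF'.comp_injective Sum.inl_injective) (hF'.comp_injective Sum.inr_injective)

section Doubling

variable {τ : ℂ} (hτ : 0 < τ.im) (X Y : ℂ)
include hτ

lemma summable_thetaTerm_mul_thetaTerm (c c' : ℂ) :
    Summable fun p : ℤ × ℤ => thetaTerm c X τ p.1 * thetaTerm c' Y τ p.2 :=
  summable_mul_of_summable_norm (summable_norm_thetaTerm hτ c X) (summable_norm_thetaTerm hτ c' Y)

lemma im_two_mul_pos : 0 < (2 * τ).im := by
  simpa using hτ

lemma jTheta_three_mul_jTheta_three :
    jTheta 3 X τ * jTheta 3 Y τ =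
      jTheta 3 (X + Y) (2 * τ) * jTheta 3 (X - Y) (2 * τ) +
        jTheta 2 (X + Y) (2 * τ) * jTheta 2 (X - Y) (2 * τ) := by
  have h2τ := im_two_mul_pos hτ
  simp only [jTheta_two_eq_tsum, jTheta_three_eq_tsum, tsum_thetaTerm_mul_tsum_thetaTerm hτ,
    tsum_thetaTerm_mul_tsum_thetaTerm h2τ,
    tsum_eq_tsum_even_add_tsum_odd (summable_thetaTerm_mul_thetaTerm hτ X Y _ _)]
  congr 1 <;> refine tsum_congr fun p => ?_ <;> simp only [thetaTerm, ← exp_add] <;>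
    push_cast <;> ring_nf

lemma jTheta_two_mul_jTheta_two :
    jTheta 2 X τ * jTheta 2 Y τ =
      jTheta 2 (X + Y) (2 * τ) * jTheta 3 (X - Y) (2 * τ) +
        jTheta 3 (X + Y) (2 * τ) * jTheta 2 (X - Y) (2 * τ) := by
  have h2τ := im_two_mul_pos hτ
  simp only [jTheta_two_eq_tsum, jTheta_three_eq_tsum, tsum_thetaTerm_mul_tsum_thetaTerm hτ,
    tsum_thetaTerm_mul_tsum_thetaTerm h2τ,
    tsum_eq_tsum_even_add_tsum_odd (summable_thetaTerm_mul_thetaTerm hτ X Y _ _)]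
  rw [← (Equiv.prodCongr (Equiv.addRight 1) (Equiv.refl ℤ)).tsum_eq (fun p : ℤ × ℤ =>
    thetaTerm 0 (X + Y) (2 * τ) p.1 * thetaTerm (1 / 2) (X - Y) (2 * τ) p.2)]
  congr 1 <;> refine tsum_congr fun p => ?_ <;>
    simp only [thetaTerm, ← exp_add, Equiv.prodCongr_apply, Prod.map, Equiv.coe_addRight,
      Equiv.refl_apply] <;>
    push_cast <;> ring_nf

lemma jTheta_four_mul_jTheta_four :
    jTheta 4 X τ * jTheta 4 Y τ =
      jTheta 3 (X + Y) (2 * τ) * jTheta 3 (X - Y) (2 * τ) -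
        jTheta 2 (X + Y) (2 * τ) * jTheta 2 (X - Y) (2 * τ) := by
  rw [jTheta_four_eq_jTheta_three, jTheta_four_eq_jTheta_three,
    jTheta_three_mul_jTheta_three hτ, show X + 1 / 2 + (Y + 1 / 2) = X + Y + 1 by ring,
    show X + 1 / 2 - (Y + 1 / 2) = X - Y by ring, jTheta_three_add_one, jTheta_two_add_one]
  ring

lemma jTheta_one_mul_jTheta_one :
    jTheta 1 X τ * jTheta 1 Y τ =
      jTheta 3 (X + Y) (2 * τ) * jTheta 2 (X - Y) (2 * τ) -
        jTheta 2 (X + Y) (2 * τ) * jTheta 3 (X - Y) (2 * τ) := by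
  rw [jTheta_one_eq_neg_jTheta_two, jTheta_one_eq_neg_jTheta_two, neg_mul_neg,
    jTheta_two_mul_jTheta_two hτ, show X + 1 / 2 + (Y + 1 / 2) = X + Y + 1 by ring,
    show X + 1 / 2 - (Y + 1 / 2) = X - Y by ring, jTheta_three_add_one, jTheta_two_add_one]
  ring

end Doubling

def pm (e : Bool) : ℂ := if e then 1 else -1

@[simp] lemma pm_true : pm true = 1 := rfl

@[simp] lemma pm_false : pm false = -1 := rfl

/-- Row and column intertwining vectors: every shift coefficient of the L-operator is
`rowVec i (2λ - u) * colVec j (2λ + u)` up to a factor independent of `i, j`. -/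
def rowVec (τ : ℂ) (b : Fin 2) (w : ℂ) : ℂ :=
  if b = 0 then jTheta 2 w (2 * τ) + jTheta 3 w (2 * τ) else jTheta 2 w (2 * τ) - jTheta 3 w (2 * τ)

def colVec (τ : ℂ) (b : Fin 2) (w : ℂ) : ℂ :=
  if b = 0 then jTheta 3 w (2 * τ) - jTheta 2 w (2 * τ) else jTheta 3 w (2 * τ) + jTheta 2 w (2 * τ)

lemma sum_colVec_mul_rowVec {τ : ℂ} (hτ : 0 < τ.im) (X Y : ℂ) :
    ∑ b, colVec τ b (X + Y) * rowVec τ b (X - Y) = 2 * jTheta 1 X τ * jTheta 1 Y τ := by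
  rw [Fin.sum_univ_two, mul_assoc, jTheta_one_mul_jTheta_one hτ]
  simp only [rowVec, colVec, if_pos, if_neg one_ne_zero]
  ring

def siteOp {N : ℕ} (η : ℂ) (n : Fin N) (κ : ℂ → Bool → ℂ) (g : (Fin N → ℂ) → ℂ)
    (z : Fin N → ℂ) : ℂ :=
  ∑ e : Bool, κ (z n) e * g (Function.update z n (z n + pm e * η))

def lCoeff (τ η s lam : ℂ) (i j : Fin 2) (x : ℂ) (e : Bool) : ℂ :=
  rowVec τ i (2 * lam - (pm e * (2 * x) - 2 * s * η)) *
    (pm e / (2 * jTheta 1 (2 * x) τ) * colVec τ j (2 * lam + (pm e * (2 * x) - 2 * s * η)))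

lemma LOpN_eq_siteOp {τ : ℂ} (hτ : 0 < τ.im) (η s lam : ℂ) (N : ℕ) (n : Fin N) (i j : Fin 2) :
    LOpN τ η s lam N n i j = siteOp η n (lCoeff τ η s lam i j) := by
  funext g z
  simp only [LOpN, sOpN, siteOp, lCoeff, Fintype.sum_bool, pm_true, pm_false, one_mul,
    neg_one_mul, ← sub_eq_add_neg]
  set gp := g (Function.update z n (z n + η))
  set gm := g (Function.update z n (z n - η))
  set d := 2 * jTheta 1 (2 * z n) τ
  set up := 2 * z n - 2 * s * η
  set um := -(2 * z n) - 2 * s * η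
  have h1 := jTheta_one_mul_jTheta_one hτ (2 * lam)
  have h2 := jTheta_two_mul_jTheta_two hτ (2 * lam)
  have h3 := jTheta_three_mul_jTheta_three hτ (2 * lam)
  have h4 := jTheta_four_mul_jTheta_four hτ (2 * lam)
  fin_cases i <;> fin_cases j <;>
    simp only [rowVec, colVec, Fin.zero_eta, Fin.mk_one, Fin.isValue, one_ne_zero, if_true,
      if_false] <;> first
    | linear_combination gp / d * (h1 up + h4 up) - gm / d * (h1 um + h4 um)
    | linear_combination gp / d * (h2 up + h3 up) - gm / d * (h2 um + h3 um)
    | linear_combination gp / d * (h2 up - h3 up) - gm / d * (h2 um - h3 um)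
    | linear_combination gp / d * (h1 up - h4 up) - gm / d * (h1 um - h4 um)

section Expansion

variable {N : ℕ} (η : ℂ)

def shiftPt (s S : Finset (Fin N)) (z : Fin N → ℂ) : Fin N → ℂ :=
  fun m => if m ∈ s then z m + pm (decide (m ∈ S)) * η else z m

lemma shiftPt_update {s S S' : Finset (Fin N)} {n : Fin N} (hn : n ∉ s) (e : Bool)
    (he : decide (n ∈ S') = e) (hS : ∀ m ∈ s, m ∈ S' ↔ m ∈ S) (z : Fin N → ℂ) :
    shiftPt η s S (Function.update z n (z n + pm e * η)) = shiftPt η (insert n s) S' z := by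
  funext m
  by_cases hm : m = n
  · subst hm
    simp [shiftPt, hn, he]
  · by_cases hms : m ∈ s
    · simp [shiftPt, hm, hms, hS m hms]
    · simp [shiftPt, hm, hms]

theorem foldr_siteOp_apply (κ : Fin N → ℂ → Bool → ℂ) (f : (Fin N → ℂ) → ℂ) :
    ∀ ns : List (Fin N), ns.Nodup → ∀ z : Fin N → ℂ,
      ns.foldr (fun n g => siteOp η n (κ n) g) f z =
        ∑ S ∈ ns.toFinset.powerset,
          (∏ n ∈ ns.toFinset, κ n (z n) (decide (n ∈ S))) * f (shiftPt η ns.toFinset S z)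
  | [], _, z => by simp [show shiftPt η ∅ ∅ z = z from funext fun m => by simp [shiftPt]]
  | n :: ns, hnd, z => by
    obtain ⟨hn, hns⟩ := List.nodup_cons.mp hnd
    replace hn : n ∉ ns.toFinset := by simpa using hn
    have step (e : Bool) (S S' : Finset (Fin N)) (he : decide (n ∈ S') = e)
        (hS : ∀ m ∈ ns.toFinset, m ∈ S' ↔ m ∈ S) :
        κ n (z n) e * ((∏ m ∈ ns.toFinset,
            κ m (Function.update z n (z n + pm e * η) m) (decide (m ∈ S))) *
          f (shiftPt η ns.toFinset S (Function.update z n (z n + pm e * η)))) =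
        (∏ m ∈ insert n ns.toFinset, κ m (z m) (decide (m ∈ S'))) *
          f (shiftPt η (insert n ns.toFinset) S' z) := by
      have hprod : ∏ m ∈ ns.toFinset, κ m (Function.update z n (z n + pm e * η) m) (decide (m ∈ S))
          = ∏ m ∈ ns.toFinset, κ m (z m) (decide (m ∈ S')) :=
        prod_congr rfl fun m hm => by
          rw [Function.update_of_ne (ne_of_mem_of_not_mem hm hn), decide_eq_decide.mpr (hS m hm)]
      rw [shiftPt_update η hn e he hS, hprod, prod_insert hn, he, mul_assoc]
    rw [List.foldr_cons, siteOp, Fintype.sum_bool, foldr_siteOp_apply κ f ns hns,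
      foldr_siteOp_apply κ f ns hns, List.toFinset_cons, sum_powerset_insert hn, mul_sum,
      mul_sum, add_comm]
    congr 1 <;> refine sum_congr rfl fun S hS => ?_
    · have hnS : n ∉ S := fun h => hn (mem_powerset.mp hS h)
      exact step false S S (by simpa using hnS) fun _ _ => Iff.rfl
    · exact step true S (insert n S) (by simp) fun m hm => by
        simp [ne_of_mem_of_not_mem hm hn]

end Expansion

lemma cyc_eq_finRotate {N : ℕ} (n : Fin N) : cyc n = finRotate N n := by
  rw [finRotate_apply]
  ext
  simp [cyc, Fin.val_add]

/-- The trace of a product of rank-one matrices `r n ⊗ c n`, cyclically ordered by `σ`,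
is the product of the contractions `⟨c n, r (σ n)⟩`. -/
theorem sum_prod_mul_comp_perm {ι κ R : Type*} [Fintype ι] [DecidableEq ι] [Fintype κ]
    [CommSemiring R] (σ : Equiv.Perm ι) (r c : ι → κ → R) :
    ∑ i : ι → κ, ∏ n, r n (i n) * c n (i (σ n)) = ∏ n, ∑ b, c n b * r (σ n) b := by
  calc ∑ i : ι → κ, ∏ n, r n (i n) * c n (i (σ n))
      = ∑ i : ι → κ, ∏ n, c n (i (σ n)) * r (σ n) (i (σ n)) := by
        refine sum_congr rfl fun i _ => ?_
        rw [prod_mul_distrib, prod_mul_distrib, Equiv.prod_comp σ fun m => r m (i m)]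
        exact mul_comm _ _
    _ = ∑ i : ι → κ, ∏ m, c (σ.symm m) (i m) * r m (i m) :=
        sum_congr rfl fun i _ => Fintype.prod_equiv σ _ _ fun n => by simp
    _ = ∏ m, ∑ b, c (σ.symm m) b * r m b :=
        (Fintype.prod_sum fun m b => c (σ.symm m) b * r m b).symm
    _ = ∏ n, ∑ b, c n b * r (σ n) b := Fintype.prod_equiv σ.symm _ _ fun m => by simp

lemma sum_prod_lCoeff {τ : ℂ} (hτ : 0 < τ.im) (η s lam : ℂ) {N : ℕ} (z : Fin N → ℂ)
    (ε : Fin N → Bool) :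
    ∑ i : Fin N → Fin 2, ∏ n, lCoeff τ η s lam (i n) (i (cyc n)) (z n) (ε n) =
      ∏ n, pm (ε n) / jTheta 1 (2 * z n) τ *
        jTheta 1 (2 * lam + pm (ε n) * z n - pm (ε (cyc n)) * z (cyc n)) τ *
        jTheta 1 (pm (ε n) * z n + pm (ε (cyc n)) * z (cyc n) - 2 * s * η) τ := by
  simp only [lCoeff, cyc_eq_finRotate]
  rw [sum_prod_mul_comp_perm (finRotate N)
    (fun n b => rowVec τ b (2 * lam - (pm (ε n) * (2 * z n) - 2 * s * η)))
    fun n b => pm (ε n) / (2 * jTheta 1 (2 * z n) τ) *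
      colVec τ b (2 * lam + (pm (ε n) * (2 * z n) - 2 * s * η))]
  refine prod_congr rfl fun n _ => ?_
  set a := pm (ε n) * z n
  set b := pm (ε (finRotate N n)) * z (finRotate N n)
  have hsum := sum_colVec_mul_rowVec hτ (2 * lam + a - b) (a + b - 2 * s * η)
  rw [show 2 * lam + a - b + (a + b - 2 * s * η) = 2 * lam + (pm (ε n) * (2 * z n) - 2 * s * η)
      by ring,
    show 2 * lam + a - b - (a + b - 2 * s * η) =
      2 * lam - (pm (ε (finRotate N n)) * (2 * z (finRotate N n)) - 2 * s * η) by ring] at hsum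
  simp_rw [mul_assoc _ (colVec τ _ _), ← mul_sum, hsum]
  ring

theorem transfer_eq_sum {τ : ℂ} (hτ : 0 < τ.im) (η s lam : ℂ) (N : ℕ)
    (f : (Fin N → ℂ) → ℂ) (z : Fin N → ℂ) :
    transfer τ η s lam N f z = ∑ S : Finset (Fin N),
      (∏ n, pm (decide (n ∈ S)) / jTheta 1 (2 * z n) τ *
        jTheta 1 (2 * lam + pm (decide (n ∈ S)) * z n - pm (decide (cyc n ∈ S)) * z (cyc n)) τ *
        jTheta 1 (pm (decide (n ∈ S)) * z n + pm (decide (cyc n ∈ S)) * z (cyc n) - 2 * s * η) τ) *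
      f (shiftPt η univ S z) := by
  simp only [transfer, LOpN_eq_siteOp hτ, List.ofFn_eq_map, List.foldr_map,
    foldr_siteOp_apply η _ f _ (List.nodup_finRange N), List.toFinset_finRange, powerset_univ]
  rw [sum_comm]
  simp only [← sum_mul, sum_prod_lCoeff hτ]

section Gauge

variable (τ η : ℂ) (n : ℕ)

lemma jTheta_one_mul_PhiFun_add_two_mul (x : ℂ) :
    jTheta 1 (x - n * η) τ * PhiFun τ η n (x + 2 * η) =
      jTheta 1 (x + (n + 2) * η) τ * PhiFun τ η n x := by
  set g : ℕ → ℂ := fun j => jTheta 1 (x + (2 * j - n) * η) τ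
  have hshift : PhiFun τ η n (x + 2 * η) = ∏ j ∈ range (n + 1), g (j + 1) :=
    prod_congr rfl fun j _ => by simp only [g]; congr 1; push_cast; ring
  have hfirst : jTheta 1 (x - n * η) τ = g 0 := by simp only [g]; congr 1; push_cast; ring
  have hlast : jTheta 1 (x + (n + 2) * η) τ = g (n + 1) := by
    simp only [g]; congr 1; push_cast; ring
  rw [hshift, hfirst, hlast, mul_comm (g 0), ← prod_range_succ', prod_range_succ, mul_comm]
  rfl

lemma PhiFun_neg (w : ℂ) : PhiFun τ η n (-w) = (-1) ^ (n + 1) * PhiFun τ η n w := by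
  have h := prod_neg (s := range (n + 1)) fun j => jTheta 1 (w + (2 * ((n - j : ℕ) : ℂ) - n) * η) τ
  rw [card_range] at h
  rw [PhiFun, PhiFun, ← prod_range_reflect (fun j => jTheta 1 (w + (2 * (j : ℂ) - n) * η) τ),
    Nat.add_sub_cancel, ← h]
  refine prod_congr rfl fun j hj => ?_
  rw [← jTheta_one_neg, Nat.cast_sub (Nat.lt_succ_iff.mp (mem_range.mp hj))]
  congr 1
  ring

lemma phiFun_neg_left (x y : ℂ) : phiFun τ η n (-x) y = phiFun τ η n x y := by
  rw [phiFun, phiFun, show -x - y = -(x + y) by ring, show -x + y = -(x - y) by ring,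
    PhiFun_neg, PhiFun_neg, mul_mul_mul_comm, ← mul_pow, neg_one_mul, neg_neg, one_pow, one_mul,
    mul_comm]

lemma phiFun_neg_right (x y : ℂ) : phiFun τ η n x (-y) = phiFun τ η n x y := by
  rw [phiFun, phiFun, sub_neg_eq_add, ← sub_eq_add_neg, mul_comm]

lemma phiFun_pm_mul (e e' : Bool) (x y : ℂ) :
    phiFun τ η n (pm e * x) (pm e' * y) = phiFun τ η n x y := by
  cases e <;> cases e' <;> simp [phiFun_neg_left, phiFun_neg_right]

lemma pm_mul_add_pm_mul (e : Bool) (x : ℂ) : pm e * (x + pm e * η) = pm e * x + η := by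
  cases e <;> simp only [pm_true, pm_false] <;> ring

/-- Moving one pair of neighbouring sites by `±η` changes `φ_ℓ` by the ratio of the
spin-`ℓ` and spin-`(-ℓ-1)` link factors. -/
lemma jTheta_one_mul_phiFun_shift (e e' : Bool) (x y : ℂ) :
    jTheta 1 (pm e * x + pm e' * y - n * η) τ * phiFun τ η n (x + pm e * η) (y + pm e' * η) =
      jTheta 1 (pm e * x + pm e' * y + (n + 2) * η) τ * phiFun τ η n x y := by
  rw [← phiFun_pm_mul τ η n e e' (x + pm e * η), ← phiFun_pm_mul τ η n e e' x y,
    pm_mul_add_pm_mul, pm_mul_add_pm_mul, phiFun, phiFun]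
  set X := pm e * x
  set Y := pm e' * y
  rw [show X + η - (Y + η) = X - Y by ring, show X + η + (Y + η) = X + Y + 2 * η by ring]
  linear_combination PhiFun τ η n (X - Y) * jTheta_one_mul_PhiFun_add_two_mul τ η n (X + Y)

end Gauge

end

theorem transfer_intertwining_general (τ η lam : ℂ) (hτ : 0 < τ.im) (N : ℕ)
    (n2ℓ : ℕ) (f : (Fin N → ℂ) → ℂ) (z : Fin N → ℂ) :
    transfer τ η ((n2ℓ : ℂ)/2) lam N
        (fun w => (∏ n : Fin N, phiFun τ η n2ℓ (w n) (w (cyc n))) * f w) z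
      = (∏ n : Fin N, phiFun τ η n2ℓ (z n) (z (cyc n))) *
          transfer τ η (-((n2ℓ : ℂ)/2) - 1) lam N f z := by
  rw [transfer_eq_sum hτ, transfer_eq_sum hτ, mul_sum]
  refine sum_congr rfl fun S _ => ?_
  simp only [← mul_assoc, ← prod_mul_distrib]
  congr 1
  refine prod_congr rfl fun n _ => ?_
  have hlink := jTheta_one_mul_phiFun_shift τ η n2ℓ (decide (n ∈ S)) (decide (cyc n ∈ S))
    (z n) (z (cyc n))
  rw [show (n2ℓ : ℂ) * η = 2 * (n2ℓ / 2) * η by ring,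
    show ((n2ℓ : ℂ) + 2) * η = -(2 * (-(n2ℓ / 2) - 1) * η) by ring, ← sub_eq_add_neg] at hlink
  simp only [shiftPt, mem_univ, if_true]
  linear_combination pm (decide (n ∈ S)) / jTheta 1 (2 * z n) τ *
    jTheta 1 (2 * lam + pm (decide (n ∈ S)) * z n - pm (decide (cyc n ∈ S)) * z (cyc n)) τ * hlink

/-- Multiplication by `Φ = ∏_i φ_ℓ(z_i, z_{i+1})` intertwines the
spin-`(−ℓ−1)` and spin-`ℓ` transfer matrices:
`T^{(ℓ)}(λ)(Φ·f) = Φ·(T^{(−ℓ−1)}(λ)f)`, where `2ℓ = n2ℓ ∈ ℤ≥0`. -/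
theorem transfer_intertwining (τ η lam : ℂ) (hτ : 0 < τ.im) (N : ℕ) (hN : 2 ≤ N)
    (n2ℓ : ℕ) (f : (Fin N → ℂ) → ℂ) (z : Fin N → ℂ)
    (hz : ∀ n : Fin N, jTheta 1 (2 * z n) τ ≠ 0) :
    transfer τ η ((n2ℓ : ℂ)/2) lam N
        (fun w => (∏ n : Fin N, phiFun τ η n2ℓ (w n) (w (cyc n))) * f w) z
      = (∏ n : Fin N, phiFun τ η n2ℓ (z n) (z (cyc n))) *
          transfer τ η (-((n2ℓ : ℂ)/2) - 1) lam N f z :=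
  transfer_intertwining_general τ η lam hτ N n2ℓ f z
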